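/- arXiv:0909.2172 — 4 statements merged into one kernel-verified Lean document; each statement's English description precedes it below -/
import Mathlib

section
/- For every real n×m matrix K and every real n×n matrix X, the operator φ satisfies the expansion φ(K,X) = K·M(X)·Kᵀ + Aᵀ X B N̄ Kᵀ + K N̄ Bᵀ X A + Aᵀ X A + W, where M(X) = Σ_{I⊆{1,…,m}} η_I² N_I (U + Bᵀ X B) N_I. -/
open Matrix
/-- The scalar η_I = √(∏_{i∈I} ν̄ᵢ · ∏_{i∉I}(1−ν̄ᵢ)). -/
noncomputable def eta {m : ℕ} (ν : Fin m → ℝ) (I : Finset (Fin m)) : ℝ :=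
  Real.sqrt ((∏ i ∈ I, ν i) * (∏ i ∈ Iᶜ, (1 - ν i)))

/-- The m×m diagonal 0/1 matrix N_I whose i-th diagonal entry is 1 exactly when i ∈ I. -/
def NI {m : ℕ} (I : Finset (Fin m)) : Matrix (Fin m) (Fin m) ℝ :=
  Matrix.diagonal fun i => if i ∈ I then 1 else 0

/-- φ(K,X) = Σ_{I⊆{1,…,m}} η_I² (F_I(K) X F_I(K)ᵀ + V_I(K)), where
F_I(K) = Aᵀ + K N_I Bᵀ and V_I(K) = W + K N_I U N_I Kᵀ. -/
noncomputable def phi {m n : ℕ} (ν : Fin m → ℝ) (A W : Matrix (Fin n) (Fin n) ℝ)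
    (B : Matrix (Fin n) (Fin m) ℝ) (U : Matrix (Fin m) (Fin m) ℝ)
    (K : Matrix (Fin n) (Fin m) ℝ) (X : Matrix (Fin n) (Fin n) ℝ) :
    Matrix (Fin n) (Fin n) ℝ :=
  ∑ I : Finset (Fin m), (eta ν I) ^ 2 •
    ((Aᵀ + K * NI I * Bᵀ) * X * (Aᵀ + K * NI I * Bᵀ)ᵀ + (W + K * NI I * U * NI I * Kᵀ))

/-- M(X) = Σ_{I⊆{1,…,m}} η_I² N_I (U + Bᵀ X B) N_I. -/
noncomputable def Mop {m n : ℕ} (ν : Fin m → ℝ) (B : Matrix (Fin n) (Fin m) ℝ)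
    (U : Matrix (Fin m) (Fin m) ℝ) (X : Matrix (Fin n) (Fin n) ℝ) :
    Matrix (Fin m) (Fin m) ℝ :=
  ∑ I : Finset (Fin m), (eta ν I) ^ 2 • (NI I * (U + Bᵀ * X * B) * NI I)

lemma eta_sq {m : ℕ} (ν : Fin m → ℝ) (hν : ∀ i, ν i ∈ Set.Icc (0 : ℝ) 1)
    (I : Finset (Fin m)) :
    eta ν I ^ 2 = (∏ i ∈ I, ν i) * ∏ i ∈ Iᶜ, (1 - ν i) :=
  Real.sq_sqrt (mul_nonneg (Finset.prod_nonneg fun i _ => (hν i).1)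
    (Finset.prod_nonneg fun i _ => by linarith [(hν i).2]))

lemma sum_eta_sq {m : ℕ} (ν : Fin m → ℝ) (hν : ∀ i, ν i ∈ Set.Icc (0 : ℝ) 1) :
    ∑ I : Finset (Fin m), eta ν I ^ 2 = 1 := by
  simp only [eta_sq ν hν, Finset.compl_eq_univ_sdiff]
  rw [show (Finset.univ : Finset (Finset (Fin m))) = Finset.univ.powerset from
    Finset.powerset_univ.symm, ← Finset.prod_add]
  simp

lemma sum_eta_sq_ind {m : ℕ} (ν : Fin m → ℝ) (hν : ∀ i, ν i ∈ Set.Icc (0 : ℝ) 1)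
    (i : Fin m) :
    ∑ I : Finset (Fin m), eta ν I ^ 2 * (if i ∈ I then 1 else 0) = ν i := by
  simp only [eta_sq ν hν]
  have key : ∀ I : Finset (Fin m),
      ((∏ j ∈ I, ν j) * ∏ j ∈ Iᶜ, (1 - ν j)) * (if i ∈ I then 1 else 0)
        = (∏ j ∈ I, ν j) * ∏ j ∈ Iᶜ, (if j = i then 0 else 1 - ν j) := by
    intro I
    by_cases h : i ∈ I
    · simp only [h, if_pos, mul_one]
      congr 1
      apply Finset.prod_congr rfl
      intro j hj
      have : j ≠ i := by rintro rfl; exact (Finset.mem_compl.mp hj) h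
      simp [this]
    · have hi : i ∈ Iᶜ := Finset.mem_compl.mpr h
      simp only [h, if_neg, not_false_iff, mul_zero]
      rw [Finset.prod_eq_zero hi (by simp)]
      ring
  rw [Finset.sum_congr rfl fun I _ => key I]
  simp only [Finset.compl_eq_univ_sdiff]
  rw [show (Finset.univ : Finset (Finset (Fin m))) = Finset.univ.powerset from
    Finset.powerset_univ.symm, ← Finset.prod_add]
  rw [Finset.prod_eq_single i (fun j _ hj => by simp [hj]) (by simp)]
  simp

lemma sum_eta_sq_NI {m : ℕ} (ν : Fin m → ℝ) (hν : ∀ i, ν i ∈ Set.Icc (0 : ℝ) 1) :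
    ∑ I : Finset (Fin m), eta ν I ^ 2 • NI I = Matrix.diagonal ν := by
  ext i j
  simp only [Finset.sum_apply, Matrix.sum_apply, Matrix.smul_apply, NI,
    Matrix.diagonal_apply, smul_eq_mul]
  by_cases h : i = j
  · subst h; simp only [if_pos rfl]; exact sum_eta_sq_ind ν hν i
  · simp [h]

theorem phi_expansion' (m n : ℕ) (ν : Fin m → ℝ)
    (hν : ∀ i, ν i ∈ Set.Icc (0 : ℝ) 1)
    (A W : Matrix (Fin n) (Fin n) ℝ) (B : Matrix (Fin n) (Fin m) ℝ)
    (U : Matrix (Fin m) (Fin m) ℝ)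
    (K : Matrix (Fin n) (Fin m) ℝ) (X : Matrix (Fin n) (Fin n) ℝ) :
    (∑ I : Finset (Fin m), (eta ν I) ^ 2 •
      ((Aᵀ + K * NI I * Bᵀ) * X * (Aᵀ + K * NI I * Bᵀ)ᵀ + (W + K * NI I * U * NI I * Kᵀ))) =
      K * (∑ I : Finset (Fin m), (eta ν I) ^ 2 • (NI I * (U + Bᵀ * X * B) * NI I)) * Kᵀ
        + Aᵀ * X * B * Matrix.diagonal ν * Kᵀ +
        K * Matrix.diagonal ν * Bᵀ * X * A + Aᵀ * X * A + W := by
  have key : ∀ I : Finset (Fin m),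
      (Aᵀ + K * NI I * Bᵀ) * X * (Aᵀ + K * NI I * Bᵀ)ᵀ + (W + K * NI I * U * NI I * Kᵀ)
        = K * (NI I * (U + Bᵀ * X * B) * NI I) * Kᵀ + Aᵀ * X * (B * (NI I * Kᵀ))
          + K * NI I * (Bᵀ * X * A) + Aᵀ * X * A + W := by
    intro I
    have hN : (NI I)ᵀ = NI I := Matrix.diagonal_transpose _
    simp only [Matrix.transpose_add, Matrix.transpose_mul, Matrix.transpose_transpose, hN,
      Matrix.mul_add, Matrix.add_mul, Matrix.mul_assoc]
    abel
  rw [Finset.sum_congr rfl fun I _ => by rw [key I]]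
  simp only [smul_add, Finset.sum_add_distrib]
  have h1 : (∑ I : Finset (Fin m),
      eta ν I ^ 2 • (K * (NI I * (U + Bᵀ * X * B) * NI I) * Kᵀ))
      = K * (∑ I : Finset (Fin m), (eta ν I) ^ 2 • (NI I * (U + Bᵀ * X * B) * NI I)) * Kᵀ := by
    rw [Matrix.mul_sum, Matrix.sum_mul]
    exact Finset.sum_congr rfl fun I _ => by
      rw [Matrix.mul_smul, Matrix.smul_mul]
  have h2 : (∑ I : Finset (Fin m), eta ν I ^ 2 • (Aᵀ * X * (B * (NI I * Kᵀ))))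
      = Aᵀ * X * B * Matrix.diagonal ν * Kᵀ := by
    have e : Aᵀ * X * B * Matrix.diagonal ν * Kᵀ
        = Aᵀ * X * (B * ((∑ I : Finset (Fin m), eta ν I ^ 2 • NI I) * Kᵀ)) := by
      rw [sum_eta_sq_NI ν hν, Matrix.mul_assoc, Matrix.mul_assoc]
    rw [e, Matrix.sum_mul, Matrix.mul_sum, Matrix.mul_sum]
    exact Finset.sum_congr rfl fun I _ => by
      rw [Matrix.smul_mul, Matrix.mul_smul, Matrix.mul_smul]
  have h3 : (∑ I : Finset (Fin m), eta ν I ^ 2 • (K * NI I * (Bᵀ * X * A)))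
      = K * Matrix.diagonal ν * Bᵀ * X * A := by
    have e : K * Matrix.diagonal ν * Bᵀ * X * A
        = K * (∑ I : Finset (Fin m), eta ν I ^ 2 • NI I) * (Bᵀ * X * A) := by
      simp only [sum_eta_sq_NI ν hν, Matrix.mul_assoc]
    rw [e, Matrix.mul_sum, Matrix.sum_mul]
    exact Finset.sum_congr rfl fun I _ => by
      rw [Matrix.mul_smul, Matrix.smul_mul]
  have h4 : (∑ I : Finset (Fin m), eta ν I ^ 2 • (Aᵀ * X * A)) = Aᵀ * X * A := by
    rw [← Finset.sum_smul, sum_eta_sq ν hν, one_smul]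
  have h5 : (∑ I : Finset (Fin m), eta ν I ^ 2 • W) = W := by
    rw [← Finset.sum_smul, sum_eta_sq ν hν, one_smul]
  rw [h1, h2, h3, h4, h5]

/-- for every real n×m matrix K and n×n matrix X,
φ(K,X) = K M(X) Kᵀ + Aᵀ X B N̄ Kᵀ + K N̄ Bᵀ X A + Aᵀ X A + W. -/
theorem phi_expansion (m n : ℕ) (hm : 0 < m) (hn : 0 < n) (ν : Fin m → ℝ)
    (hν : ∀ i, ν i ∈ Set.Icc (0 : ℝ) 1)
    (A W : Matrix (Fin n) (Fin n) ℝ) (B : Matrix (Fin n) (Fin m) ℝ)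
    (U : Matrix (Fin m) (Fin m) ℝ)
    (K : Matrix (Fin n) (Fin m) ℝ) (X : Matrix (Fin n) (Fin n) ℝ) :
    phi ν A W B U K X =
      K * Mop ν B U X * Kᵀ + Aᵀ * X * B * Matrix.diagonal ν * Kᵀ +
        K * Matrix.diagonal ν * Bᵀ * X * A + Aᵀ * X * A + W := by
  unfold phi Mop
  exact phi_expansion' m n ν hν A W B U K X
end

section
/- Let 𝓛(Y) = Σ_{I⊆{1,…,m}} η_I² F_I Y F_Iᵀ for fixed real n×n matrices F_I. If there exists a positive definite n×n matrix Ȳ with 𝓛(Ȳ) ≺ Ȳ, then there exists r ∈ [0,1) with 𝓛(Ȳ) ⪯ r Ȳ, and for every positive semidefinite n×n matrix W₀ and every real m₀ ≥ 0 with W₀ ⪯ m₀ Ȳ, one has 0 ⪯ 𝓛ᵏ(W₀) ⪯ m₀ rᵏ Ȳ for every k ∈ ℕ, where 𝓛ᵏ denotes the k-fold iterate of 𝓛. -/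
open Matrix

/-- The linear operator 𝓛(Y) = Σ_{I⊆{1,…,m}} η_I² F_I Y F_Iᵀ. -/
noncomputable def Lop {m n : ℕ} (ν : Fin m → ℝ)
    (F : Finset (Fin m) → Matrix (Fin n) (Fin n) ℝ)
    (Y : Matrix (Fin n) (Fin n) ℝ) : Matrix (Fin n) (Fin n) ℝ :=
  ∑ I : Finset (Fin m), (eta ν I) ^ 2 • (F I * Y * (F I)ᵀ)

/-! Since `Ȳ - 𝓛(Ȳ)` is strictly positive and the spectrum of `Ȳ` is bounded, the continuous
functional calculus gives `ε ∈ (0, 1]` with `ε Ȳ ⪯ Ȳ - 𝓛(Ȳ)`, i.e. `𝓛(Ȳ) ⪯ (1 - ε) Ȳ`.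
The operator `𝓛` is linear and monotone for the Loewner order, so applying it `k` times to
`0 ⪯ W₀ ⪯ m₀ Ȳ` yields `0 ⪯ 𝓛ᵏ(W₀) ⪯ m₀ (1 - ε)ᵏ Ȳ`. -/

theorem exists_pos_smul_le_of_isStrictlyPositive {A : Type*} [TopologicalSpace A] [Ring A]
    [StarRing A] [PartialOrder A] [StarOrderedRing A] [Algebra ℝ A] [PosSMulMono ℝ A]
    [NonnegSpectrumClass ℝ A] [ContinuousFunctionalCalculus ℝ A IsSelfAdjoint]
    {a b : A} (ha : IsStrictlyPositive a) (hb : IsSelfAdjoint b) :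
    ∃ ε : ℝ, 0 < ε ∧ ε ≤ 1 ∧ ε • b ≤ a := by
  cases subsingleton_or_nontrivial A
  · exact ⟨1, one_pos, le_rfl, (Subsingleton.elim _ _).le⟩
  obtain ⟨r, hr, hra⟩ := (CFC.exists_pos_algebraMap_le_iff ha.isSelfAdjoint).2
    fun _ hx ↦ ha.spectrum_pos hx
  obtain ⟨s, hs⟩ := (ContinuousFunctionalCalculus.isCompact_spectrum
    (R := ℝ) (p := IsSelfAdjoint) b).bddAbove
  have hb_le : b ≤ algebraMap ℝ A (max s r) :=
    le_algebraMap_of_spectrum_le (fun x hx ↦ (hs hx).trans (le_max_left s r)) hb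
  have hpos : 0 < max s r := hr.trans_le (le_max_right s r)
  refine ⟨r / max s r, div_pos hr hpos, div_le_one_of_le₀ (le_max_right s r) hpos.le, ?_⟩
  calc (r / max s r) • b ≤ (r / max s r) • algebraMap ℝ A (max s r) :=
        smul_le_smul_of_nonneg_left hb_le (div_pos hr hpos).le
    _ = algebraMap ℝ A r := by rw [Algebra.smul_def, ← map_mul, div_mul_cancel₀ r hpos.ne']
    _ ≤ a := hra

theorem PositiveLinearMap.iterate_le_smul {M : Type*} [AddCommGroup M] [PartialOrder M]
    [IsOrderedAddMonoid M] [Module ℝ M] [PosSMulMono ℝ M] (T : M →ₚ[ℝ] M) {x y : M} {r c : ℝ}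
    (hr : 0 ≤ r) (hc : 0 ≤ c) (hTy : T y ≤ r • y) (hx : x ≤ c • y) (k : ℕ) :
    T^[k] x ≤ (c * r ^ k) • y := by
  induction k with
  | zero => simpa using hx
  | succ k ih =>
    calc T^[k + 1] x = T (T^[k] x) := Function.iterate_succ_apply' T k x
      _ ≤ T ((c * r ^ k) • y) := T.monotone ih
      _ = (c * r ^ k) • T y := map_smul T _ y
      _ ≤ (c * r ^ k) • (r • y) := smul_le_smul_of_nonneg_left hTy (by positivity)
      _ = (c * r ^ (k + 1)) • y := by rw [smul_smul, pow_succ, mul_assoc]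

theorem PositiveLinearMap.iterate_nonneg {M : Type*} [AddCommGroup M] [PartialOrder M]
    [IsOrderedAddMonoid M] [Module ℝ M] (T : M →ₚ[ℝ] M) {x : M} (hx : 0 ≤ x) (k : ℕ) :
    0 ≤ T^[k] x :=
  Function.iterate_fixed (map_zero T) k ▸ T.monotone.iterate k hx

open scoped MatrixOrder

section

variable {m n : ℕ} (ν : Fin m → ℝ) (F : Finset (Fin m) → Matrix (Fin n) (Fin n) ℝ)

theorem posSemidef_Lop {Y : Matrix (Fin n) (Fin n) ℝ} (hY : Y.PosSemidef) :
    (Lop ν F Y).PosSemidef :=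
  posSemidef_sum _ fun I _ ↦ by
    simpa only [conjTranspose_eq_transpose_of_trivial] using
      (hY.mul_mul_conjTranspose_same (F I)).smul (sq_nonneg (eta ν I))

noncomputable def Lop.toPositiveLinearMap : Matrix (Fin n) (Fin n) ℝ →ₚ[ℝ] Matrix (Fin n) (Fin n) ℝ :=
  .mk₀
    { toFun := Lop ν F
      map_add' A B := by
        simp only [Lop, Matrix.mul_add, Matrix.add_mul, smul_add, Finset.sum_add_distrib]
      map_smul' c A := by
        simp only [Lop, Matrix.mul_smul, Matrix.smul_mul, Finset.smul_sum, RingHom.id_apply]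
        exact Finset.sum_congr rfl fun I _ ↦ smul_comm _ _ _ }
    fun _ hY ↦ (posSemidef_Lop ν F hY.posSemidef).nonneg

end

theorem Lop_iterate_decay_general (m n : ℕ) (ν : Fin m → ℝ)
    (F : Finset (Fin m) → Matrix (Fin n) (Fin n) ℝ)
    (Ybar : Matrix (Fin n) (Fin n) ℝ) (hYbar : Ybar.PosDef)
    (hL : (Ybar - Lop ν F Ybar).PosDef) :
    ∃ r : ℝ, 0 ≤ r ∧ r < 1 ∧ (r • Ybar - Lop ν F Ybar).PosSemidef ∧
      ∀ (W₀ : Matrix (Fin n) (Fin n) ℝ) (m₀ : ℝ), W₀.PosSemidef → 0 ≤ m₀ →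
        (m₀ • Ybar - W₀).PosSemidef →
        ∀ k : ℕ, ((Lop ν F)^[k] W₀).PosSemidef ∧
          ((m₀ * r ^ k) • Ybar - (Lop ν F)^[k] W₀).PosSemidef := by
  obtain ⟨ε, hε, hε1, hεY⟩ := exists_pos_smul_le_of_isStrictlyPositive hL.isStrictlyPositive
    hYbar.isHermitian.isSelfAdjoint
  have hLY : Lop ν F Ybar ≤ (1 - ε) • Ybar := by
    rw [sub_smul, one_smul]; exact le_sub_comm.mp hεY
  refine ⟨1 - ε, by linarith, by linarith, hLY, fun W₀ m₀ hW₀ hm₀ hW₀Y k ↦ ⟨?_, ?_⟩⟩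
  · exact ((Lop.toPositiveLinearMap ν F).iterate_nonneg hW₀.nonneg k).posSemidef
  · exact (Lop.toPositiveLinearMap ν F).iterate_le_smul (by linarith) hm₀ hLY hW₀Y k

/-- if Ȳ ≻ 0 and 𝓛(Ȳ) ≺ Ȳ, then there is r ∈ [0,1) with 𝓛(Ȳ) ⪯ r Ȳ,
and for every W₀ ⪰ 0 and m₀ ≥ 0 with W₀ ⪯ m₀ Ȳ one has
0 ⪯ 𝓛ᵏ(W₀) ⪯ m₀ rᵏ Ȳ for all k. -/
theorem Lop_iterate_decay (m n : ℕ) (hm : 0 < m) (hn : 0 < n) (ν : Fin m → ℝ)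
    (hν : ∀ i, ν i ∈ Set.Icc (0 : ℝ) 1)
    (F : Finset (Fin m) → Matrix (Fin n) (Fin n) ℝ)
    (Ybar : Matrix (Fin n) (Fin n) ℝ) (hYbar : Ybar.PosDef)
    (hL : (Ybar - Lop ν F Ybar).PosDef) :
    ∃ r : ℝ, 0 ≤ r ∧ r < 1 ∧ (r • Ybar - Lop ν F Ybar).PosSemidef ∧
      ∀ (W₀ : Matrix (Fin n) (Fin n) ℝ) (m₀ : ℝ), W₀.PosSemidef → 0 ≤ m₀ →
        (m₀ • Ybar - W₀).PosSemidef →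
        ∀ k : ℕ, ((Lop ν F)^[k] W₀).PosSemidef ∧
          ((m₀ * r ^ k) • Ybar - (Lop ν F)^[k] W₀).PosSemidef :=
  Lop_iterate_decay_general m n ν F Ybar hYbar hL
end

section
/- (Lemma L1, part a) Let 𝓛(Y) = Σ_{I⊆{1,…,m}} η_I² F_I Y F_Iᵀ for fixed real n×n matrices F_I. If there exists a positive definite n×n matrix Ȳ with 𝓛(Ȳ) ≺ Ȳ, then for every positive semidefinite n×n matrix W₀ the iterates converge to zero: limₖ→∞ 𝓛ᵏ(W₀) = 0 (entrywise). -/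
/-!
Positive definiteness of `Ȳ - 𝓛(Ȳ)` and of `Ȳ` bounds the spectra: `Ȳ ⪯ c (Ȳ - 𝓛(Ȳ))` and
`W₀ ⪯ d Ȳ` for some `c ≥ 1` and `d ≥ 0`, so `𝓛(Ȳ) ⪯ ρ Ȳ` with `ρ = 1 - 1/c < 1`. Since `𝓛` is
linear and monotone for the Loewner order, induction gives `0 ⪯ 𝓛ᵏ(W₀) ⪯ d ρᵏ Ȳ`, and a positive
semidefinite matrix `M ⪯ t Ȳ` has entries `|Mᵢⱼ| ≤ (Mᵢᵢ + Mⱼⱼ)/2 ≤ t (Ȳᵢᵢ + Ȳⱼⱼ)/2`.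
-/

open Matrix

open Filter Topology
open scoped MatrixOrder

section OrderedModule

variable {E : Type*} [AddCommGroup E] [PartialOrder E] [Module ℝ E] [PosSMulMono ℝ E]

theorem le_one_sub_inv_smul_of_le_smul_sub [IsOrderedAddMonoid E] {x y : E} {c : ℝ}
    (hc : 0 < c) (h : x ≤ c • (x - y)) : y ≤ (1 - c⁻¹) • x := by
  have hdiff : (1 - c⁻¹) • x - y = c⁻¹ • (c • (x - y) - x) := by
    rw [smul_sub, smul_smul, inv_mul_cancel₀ hc.ne', one_smul, sub_smul, one_smul]
    abel
  rw [← sub_nonneg, hdiff]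
  exact smul_nonneg (inv_nonneg.2 hc.le) (sub_nonneg.2 h)

variable {L : E →ₗ[ℝ] E} {Y W : E} {ρ c : ℝ}

theorem LinearMap.iterate_mem_Icc_smul_of_monotone (hL : Monotone L) (hρ : 0 ≤ ρ)
    (hLY : L Y ≤ ρ • Y) (hc : 0 ≤ c) (hW : 0 ≤ W) (hWY : W ≤ c • Y) (k : ℕ) :
    (⇑L)^[k] W ∈ Set.Icc 0 ((c * ρ ^ k) • Y) := by
  induction k with
  | zero => simpa using ⟨hW, hWY⟩
  | succ k ih =>
    rw [Function.iterate_succ_apply']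
    refine ⟨map_zero L ▸ hL ih.1, ?_⟩
    calc L ((⇑L)^[k] W) ≤ L ((c * ρ ^ k) • Y) := hL ih.2
      _ = (c * ρ ^ k) • L Y := map_smul L _ Y
      _ ≤ (c * ρ ^ k) • ρ • Y := smul_le_smul_of_nonneg_left hLY (by positivity)
      _ = (c * ρ ^ (k + 1)) • Y := by rw [smul_smul, pow_succ, mul_assoc]

end OrderedModule

namespace Matrix

variable {ι : Type*} [Fintype ι]

theorem PosSemidef.abs_apply_le {M : Matrix ι ι ℝ} (hM : M.PosSemidef) (i j : ι) :
    |M i j| ≤ (M i i + M j j) / 2 := by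
  classical
  have hsym : M j i = M i j := by simpa using hM.isHermitian.apply i j
  have hadd := hM.dotProduct_mulVec_nonneg (Pi.single i 1 + Pi.single j 1)
  have hsub := hM.dotProduct_mulVec_nonneg (Pi.single i 1 - Pi.single j 1)
  simp only [star_trivial, mulVec_add, mulVec_sub, dotProduct_add, dotProduct_sub, add_dotProduct,
    sub_dotProduct, mulVec_single, single_dotProduct, one_mul, MulOpposite.op_one, one_smul,
    col_apply] at hadd hsub
  rw [abs_le]
  constructor <;> nlinarith

theorem tendsto_zero_of_nonneg_of_le_smul {α : Type*} {l : Filter α}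
    {M : α → Matrix ι ι ℝ} {t : α → ℝ} {Y : Matrix ι ι ℝ} (hM : ∀ a, 0 ≤ M a)
    (hMY : ∀ a, M a ≤ t a • Y) (ht : Tendsto t l (𝓝 0)) : Tendsto M l (𝓝 0) := by
  refine tendsto_pi_nhds.2 fun i => tendsto_pi_nhds.2 fun j => ?_
  have hdiag (a : α) (k : ι) : M a k k ≤ t a * Y k k := by
    simpa [sub_nonneg] using (le_iff.1 (hMY a)).diag_nonneg (i := k)
  refine squeeze_zero_norm (fun a => ?_) (by simpa using ht.mul_const ((Y i i + Y j j) / 2))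
  calc ‖M a i j‖ = |M a i j| := Real.norm_eq_abs _
    _ ≤ (M a i i + M a j j) / 2 := (nonneg_iff_posSemidef.1 (hM a)).abs_apply_le i j
    _ ≤ t a * ((Y i i + Y j j) / 2) := by linarith [hdiag a i, hdiag a j]

variable [DecidableEq ι]

theorem PosDef.eventually_le_smul {A B : Matrix ι ι ℝ} (hA : A.PosDef) (hB : B.IsHermitian) :
    ∀ᶠ c : ℝ in atTop, B ≤ c • A := by
  cases subsingleton_or_nontrivial (Matrix ι ι ℝ) with
  | inl _ => exact .of_forall fun _ => (Subsingleton.elim _ _).le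
  | inr _ =>
    obtain ⟨r, hr, hrA⟩ := (CFC.exists_pos_algebraMap_le_iff hA.isHermitian.isSelfAdjoint).2
      fun _ hx => hA.isStrictlyPositive.spectrum_pos hx
    obtain ⟨s, hs⟩ := (ContinuousFunctionalCalculus.isCompact_spectrum (R := ℝ) B).bddAbove
    have hBs : B ≤ algebraMap ℝ (Matrix ι ι ℝ) s :=
      le_algebraMap_of_spectrum_le hs hB.isSelfAdjoint
    filter_upwards [eventually_ge_atTop (s / r), eventually_ge_atTop 0] with c hsc hc
    calc B ≤ algebraMap ℝ (Matrix ι ι ℝ) s := hBs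
      _ ≤ algebraMap ℝ _ (c * r) := algebraMap_mono _ ((div_le_iff₀ hr).1 hsc)
      _ = c • algebraMap ℝ _ r := by rw [map_mul, Algebra.smul_def]
      _ ≤ c • A := smul_le_smul_of_nonneg_left hrA hc

end Matrix

section Lop

variable {m n : ℕ} (ν : Fin m → ℝ) (F : Finset (Fin m) → Matrix (Fin n) (Fin n) ℝ)

noncomputable def Lop.linearMap : Matrix (Fin n) (Fin n) ℝ →ₗ[ℝ] Matrix (Fin n) (Fin n) ℝ where
  toFun := Lop ν F
  map_add' A B := by
    simp only [Lop, Matrix.mul_add, Matrix.add_mul, smul_add, Finset.sum_add_distrib]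
  map_smul' c A := by
    simp only [Lop, Matrix.mul_smul, Matrix.smul_mul, smul_comm c, Finset.smul_sum,
      RingHom.id_apply]

theorem Lop_monotone : Monotone (Lop ν F) := fun A B hAB =>
  Finset.sum_le_sum fun I _ => smul_le_smul_of_nonneg_left
    (by simpa only [star_eq_conjTranspose, conjTranspose_eq_transpose_of_trivial]
      using star_right_conjugate_le_conjugate hAB (F I)) (sq_nonneg _)

end Lop

theorem Lop_iterate_tendsto_zero_general (m n : ℕ) (ν : Fin m → ℝ)
    (F : Finset (Fin m) → Matrix (Fin n) (Fin n) ℝ)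
    (Ybar : Matrix (Fin n) (Fin n) ℝ) (hYbar : Ybar.PosDef)
    (hL : (Ybar - Lop ν F Ybar).PosDef)
    (W₀ : Matrix (Fin n) (Fin n) ℝ) (hW₀ : W₀.PosSemidef) :
    Filter.Tendsto (fun k : ℕ => (Lop ν F)^[k] W₀) Filter.atTop (nhds 0) := by
  obtain ⟨c, hYc, hc⟩ := ((hL.eventually_le_smul hYbar.isHermitian).and
    (eventually_ge_atTop 1)).exists
  obtain ⟨d, hWd, hd⟩ := ((hYbar.eventually_le_smul hW₀.isHermitian).and
    (eventually_ge_atTop 0)).exists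
  set ρ := 1 - c⁻¹
  have hρ : ρ ∈ Set.Ico 0 1 := ⟨sub_nonneg.2 (inv_le_one_of_one_le₀ hc),
    sub_lt_self 1 (inv_pos.2 (by linarith))⟩
  have hLY : Lop ν F Ybar ≤ ρ • Ybar :=
    le_one_sub_inv_smul_of_le_smul_sub (by linarith) hYc
  have hbound := (Lop.linearMap ν F).iterate_mem_Icc_smul_of_monotone (Lop_monotone ν F) hρ.1
    hLY hd hW₀.nonneg hWd
  exact tendsto_zero_of_nonneg_of_le_smul (fun k => (hbound k).1) (fun k => (hbound k).2)
    (by simpa using (tendsto_pow_atTop_nhds_zero_of_lt_one hρ.1 hρ.2).const_mul d)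

/-- Lemma L1, part a: if Ȳ ≻ 0 and 𝓛(Ȳ) ≺ Ȳ, then for every
positive semidefinite W₀, the iterates 𝓛ᵏ(W₀) converge to 0 (entrywise). -/
theorem Lop_iterate_tendsto_zero (m n : ℕ) (hm : 0 < m) (hn : 0 < n) (ν : Fin m → ℝ)
    (hν : ∀ i, ν i ∈ Set.Icc (0 : ℝ) 1)
    (F : Finset (Fin m) → Matrix (Fin n) (Fin n) ℝ)
    (Ybar : Matrix (Fin n) (Fin n) ℝ) (hYbar : Ybar.PosDef)
    (hL : (Ybar - Lop ν F Ybar).PosDef)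
    (W₀ : Matrix (Fin n) (Fin n) ℝ) (hW₀ : W₀.PosSemidef) :
    Filter.Tendsto (fun k : ℕ => (Lop ν F)^[k] W₀) Filter.atTop (nhds 0) :=
  Lop_iterate_tendsto_zero_general m n ν F Ybar hYbar hL W₀ hW₀
end

section
/- (Lemma L1, part b) Let 𝓛(Y) = Σ_{I⊆{1,…,m}} η_I² F_I Y F_Iᵀ for fixed real n×n matrices F_I, and suppose there exists a positive definite n×n matrix Ȳ with 𝓛(Ȳ) ≺ Ȳ. Let U₀ be a positive semidefinite n×n matrix and define Y_{k+1} = 𝓛(Y_k) + U₀ from a positive semidefinite initial matrix Y₀. Then the sequence (Y_k) is bounded; in fact there exist r ∈ [0,1) and reals m_{Y₀}, m_{U₀} ≥ 0 such that Y_k ⪯ (m_{Y₀} rᵏ + m_{U₀} (1 − rᵏ)/(1 − r)) Ȳ for every k ∈ ℕ. -/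
open Matrix

/-
A positive definite matrix dominates a positive multiple of the identity, and a Hermitian one is
dominated by a multiple of it. Hence Ȳ ⪯ c (Ȳ − 𝓛(Ȳ)) for some c ≥ 1, i.e. 𝓛(Ȳ) ⪯ r Ȳ with
r = 1 − 1/c < 1, and Y₀, U₀ lie below multiples of Ȳ. As 𝓛 is linear and preserves ⪰ 0, the bound
Y_k ⪯ a_k Ȳ propagates along a_{k+1} = r a_k + m_{U₀}, whose solution is the stated one.
-/

open scoped MatrixOrder

theorem PositiveLinearMap.affine_recurrence_le_smul {V : Type*} [AddCommGroup V] [PartialOrder V]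
    [IsOrderedAddMonoid V] [Module ℝ V] [PosSMulMono ℝ V] (L : V →ₚ[ℝ] V) {b u : V}
    {r mY mU : ℝ} (hr₀ : 0 ≤ r) (hr₁ : r < 1) (hmY : 0 ≤ mY) (hmU : 0 ≤ mU)
    (hLb : L b ≤ r • b) (hu : u ≤ mU • b) (y : ℕ → V) (hy₀ : y 0 ≤ mY • b)
    (hy : ∀ k, y (k + 1) = L (y k) + u) (k : ℕ) :
    y k ≤ (mY * r ^ k + mU * (1 - r ^ k) / (1 - r)) • b := by
  induction k with
  | zero => simpa using hy₀
  | succ k ih =>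
    set a := mY * r ^ k + mU * (1 - r ^ k) / (1 - r)
    have ha : 0 ≤ a := add_nonneg (by positivity) <| div_nonneg
      (mul_nonneg hmU (sub_nonneg.2 (pow_le_one₀ hr₀ hr₁.le))) (sub_nonneg.2 hr₁.le)
    calc y (k + 1) = L (y k) + u := hy k
      _ ≤ L (a • b) + mU • b := add_le_add (OrderHomClass.mono L ih) hu
      _ = a • L b + mU • b := by rw [map_smul]
      _ ≤ a • (r • b) + mU • b := by gcongr
      _ = (r * a + mU) • b := by module
      _ = _ := by
        congr 1
        simp only [a]
        field_simp [(sub_pos.2 hr₁).ne']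
        ring

namespace Matrix

open scoped ComplexOrder

variable {n 𝕜 : Type*} [RCLike 𝕜] [Fintype n] [DecidableEq n]

theorem IsHermitian.exists_le_smul_of_posDef {a b : Matrix n n 𝕜} (ha : a.IsHermitian)
    (hb : b.PosDef) : ∃ c : ℝ, 0 ≤ c ∧ a ≤ c • b := by
  -- the lower spectral bound for `b` needs a nontrivial algebra, i.e. `n` nonempty
  rcases isEmpty_or_nonempty n with hn | hn
  · exact ⟨0, le_rfl, (Subsingleton.elim _ _).le⟩
  obtain ⟨ε, hε, hεb⟩ := (CFC.exists_pos_algebraMap_le_iff hb.isStrictlyPositive.isSelfAdjoint).2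
    fun _ hx ↦ hb.isStrictlyPositive.spectrum_pos hx
  obtain ⟨M, hM⟩ := (ContinuousFunctionalCalculus.isCompact_spectrum (R := ℝ) a).bddAbove
  have haM : a ≤ algebraMap ℝ _ (max M 0) :=
    le_algebraMap_of_spectrum_le (fun _ hx ↦ (hM hx).trans (le_max_left _ _))
      ha.isSelfAdjoint
  refine ⟨max M 0 / ε, by positivity, haM.trans ?_⟩
  calc algebraMap ℝ _ (max M 0) = (max M 0 / ε) • algebraMap ℝ (Matrix n n 𝕜) ε := by
        rw [Algebra.smul_def, ← map_mul, div_mul_cancel₀ _ hε.ne']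
    _ ≤ (max M 0 / ε) • b := by gcongr

theorem exists_lt_one_le_smul_of_posDef_sub {b d : Matrix n n 𝕜} (hb : b.IsHermitian)
    (hd : (b - d).PosDef) : ∃ r : ℝ, 0 ≤ r ∧ r < 1 ∧ d ≤ r • b := by
  obtain ⟨c, -, hc⟩ := hb.exists_le_smul_of_posDef hd
  set c' := max c 1
  have hc' : 0 < c' := lt_of_lt_of_le one_pos (le_max_right _ _)
  have hbc' : b ≤ c' • (b - d) :=
    hc.trans (smul_le_smul_of_nonneg_right (le_max_left _ _) hd.posSemidef.nonneg)
  refine ⟨1 - c'⁻¹, sub_nonneg.2 (inv_le_one_of_one_le₀ (le_max_right _ _)),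
    sub_lt_self _ (inv_pos.2 hc'), ?_⟩
  have : c'⁻¹ • b ≤ b - d := (inv_smul_le_iff_of_pos hc').2 hbc'
  calc d = b - (b - d) := by abel
    _ ≤ b - c'⁻¹ • b := sub_le_sub_left this b
    _ = (1 - c'⁻¹) • b := by module

end Matrix

section Lop

variable {m n : ℕ} (ν : Fin m → ℝ) (F : Finset (Fin m) → Matrix (Fin n) (Fin n) ℝ)

theorem Lop_add (X Z : Matrix (Fin n) (Fin n) ℝ) :
    Lop ν F (X + Z) = Lop ν F X + Lop ν F Z := by
  simp only [Lop, Matrix.mul_add, Matrix.add_mul, smul_add, Finset.sum_add_distrib]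

theorem Lop_smul (a : ℝ) (X : Matrix (Fin n) (Fin n) ℝ) :
    Lop ν F (a • X) = a • Lop ν F X := by
  simp only [Lop, Finset.smul_sum, Matrix.mul_smul, Matrix.smul_mul, smul_comm a]

theorem Lop_nonneg {Y : Matrix (Fin n) (Fin n) ℝ} (hY : 0 ≤ Y) : 0 ≤ Lop ν F Y := by
  refine (posSemidef_sum _ fun I _ ↦ ?_).nonneg
  simpa [conjTranspose_eq_transpose_of_trivial] using
    (hY.posSemidef.mul_mul_conjTranspose_same (F I)).smul (sq_nonneg (eta ν I))

noncomputable def lopPositiveLinearMap :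
    Matrix (Fin n) (Fin n) ℝ →ₚ[ℝ] Matrix (Fin n) (Fin n) ℝ :=
  .mk₀ ⟨⟨Lop ν F, Lop_add ν F⟩, Lop_smul ν F⟩ fun _ ↦ Lop_nonneg ν F

end Lop

theorem Lop_affine_iterate_bounded_general (m n : ℕ) (ν : Fin m → ℝ)
    (F : Finset (Fin m) → Matrix (Fin n) (Fin n) ℝ)
    (Ybar : Matrix (Fin n) (Fin n) ℝ) (hYbar : Ybar.PosDef)
    (hL : (Ybar - Lop ν F Ybar).PosDef)
    (U₀ : Matrix (Fin n) (Fin n) ℝ) (hU₀ : U₀.PosSemidef)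
    (Y : ℕ → Matrix (Fin n) (Fin n) ℝ) (hY0 : (Y 0).PosSemidef)
    (hYrec : ∀ k : ℕ, Y (k + 1) = Lop ν F (Y k) + U₀) :
    ∃ r mY mU : ℝ, 0 ≤ r ∧ r < 1 ∧ 0 ≤ mY ∧ 0 ≤ mU ∧
      ∀ k : ℕ,
        ((mY * r ^ k + mU * (1 - r ^ k) / (1 - r)) • Ybar - Y k).PosSemidef := by
  obtain ⟨r, hr₀, hr₁, hLr⟩ := exists_lt_one_le_smul_of_posDef_sub hYbar.isHermitian hL
  obtain ⟨mY, hmY, hY₀le⟩ := hY0.isHermitian.exists_le_smul_of_posDef hYbar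
  obtain ⟨mU, hmU, hU₀le⟩ := hU₀.isHermitian.exists_le_smul_of_posDef hYbar
  exact ⟨r, mY, mU, hr₀, hr₁, hmY, hmU,
    (lopPositiveLinearMap ν F).affine_recurrence_le_smul hr₀ hr₁ hmY hmU hLr hU₀le Y hY₀le hYrec⟩

/-- Lemma L1, part b: if Ȳ ≻ 0 and 𝓛(Ȳ) ≺ Ȳ, U₀ ⪰ 0 and
Y_{k+1} = 𝓛(Y_k) + U₀ with Y₀ ⪰ 0, then the sequence (Y_k) is bounded:
there exist r ∈ [0,1) and m_{Y₀}, m_{U₀} ≥ 0 with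
Y_k ⪯ (m_{Y₀} rᵏ + m_{U₀} (1 − rᵏ)/(1 − r)) Ȳ for all k. -/
theorem Lop_affine_iterate_bounded (m n : ℕ) (hm : 0 < m) (hn : 0 < n) (ν : Fin m → ℝ)
    (hν : ∀ i, ν i ∈ Set.Icc (0 : ℝ) 1)
    (F : Finset (Fin m) → Matrix (Fin n) (Fin n) ℝ)
    (Ybar : Matrix (Fin n) (Fin n) ℝ) (hYbar : Ybar.PosDef)
    (hL : (Ybar - Lop ν F Ybar).PosDef)
    (U₀ : Matrix (Fin n) (Fin n) ℝ) (hU₀ : U₀.PosSemidef)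
    (Y : ℕ → Matrix (Fin n) (Fin n) ℝ) (hY0 : (Y 0).PosSemidef)
    (hYrec : ∀ k : ℕ, Y (k + 1) = Lop ν F (Y k) + U₀) :
    ∃ r mY mU : ℝ, 0 ≤ r ∧ r < 1 ∧ 0 ≤ mY ∧ 0 ≤ mU ∧
      ∀ k : ℕ,
        ((mY * r ^ k + mU * (1 - r ^ k) / (1 - r)) • Ybar - Y k).PosSemidef :=
  Lop_affine_iterate_bounded_general m n ν F Ybar hYbar hL U₀ hU₀ Y hY0 hYrec
end
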